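/- arXiv:1407.2578 — 2 statements merged into one kernel-verified Lean document; each statement's English description precedes it below -/
import Mathlib

section
/- Khintchine–Paley inequality in L¹ (scalar case, with constant 2): there is a constant C ≤ 2 such that for every finitely supported sequence of complex numbers (d_j), if f = ∑_j d_j r_j is the corresponding Rademacher polynomial, then (∑_j |d_j|²)^{1/2} ≤ C ∫_0^1 |f(t)| dt. -/
/-- The basic Rademacher function: `1` on `[0, 1/2)`, `-1` on `[1/2, 1)`,
extended with period one. -/
noncomputable def r0 (t : ℝ) : ℝ := if Int.fract t < 1 / 2 then 1 else -1

/-- The Rademacher functions `r_j(t) = r_0(2^j t)`. -/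
noncomputable def rademacher (j : ℕ) (t : ℝ) : ℝ := r0 (2 ^ j * t)

open MeasureTheory intervalIntegral Set

lemma measurable_r0 : Measurable r0 := by
  unfold r0
  exact Measurable.ite (measurableSet_lt measurable_fract measurable_const)
    measurable_const measurable_const

lemma r0_int_add (t : ℝ) (n : ℤ) : r0 (t + n) = r0 t := by
  unfold r0; rw [Int.fract_add_intCast]

lemma measurable_rademacher (j : ℕ) : Measurable (rademacher j) :=
  measurable_r0.comp (measurable_const.mul measurable_id)

lemma abs_r0 (t : ℝ) : |r0 t| ≤ 1 := by unfold r0; split <;> norm_num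

lemma abs_rademacher (j : ℕ) (t : ℝ) : |rademacher j t| ≤ 1 := abs_r0 _

lemma r0_of_lt_half {t : ℝ} (h0 : 0 ≤ t) (h : t < 1/2) : r0 t = 1 := by
  unfold r0
  rw [Int.fract_eq_self.mpr ⟨h0, by linarith⟩]
  simp only [if_pos h]

lemma r0_of_half_le {t : ℝ} (h0 : 1/2 ≤ t) (h : t < 1) : r0 t = -1 := by
  unfold r0
  rw [Int.fract_eq_self.mpr ⟨by linarith, h⟩]
  simp only [if_neg (not_lt.mpr h0)]

lemma rademacher_periodic (j : ℕ) : Function.Periodic (rademacher j) 1 := by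
  intro t
  unfold rademacher
  have : (2:ℝ) ^ j * (t + 1) = 2 ^ j * t + ((2 ^ j : ℤ) : ℝ) := by push_cast; ring
  rw [this, r0_int_add]

lemma rademacher_add_half {j : ℕ} (hj : j ≠ 0) (t : ℝ) :
    rademacher j (t + 1/2) = rademacher j t := by
  obtain ⟨k, rfl⟩ := Nat.exists_eq_succ_of_ne_zero hj
  unfold rademacher
  have : (2:ℝ) ^ (k+1) * (t + 1/2) = 2 ^ (k+1) * t + ((2 ^ k : ℤ) : ℝ) := by
    push_cast; ring
  rw [this, r0_int_add]

lemma intervalIntegrable_of_bounded {f : ℝ → ℝ} (hm : Measurable f) {C : ℝ}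
    (hb : ∀ t, |f t| ≤ C) (a b : ℝ) : IntervalIntegrable f volume a b := by
  apply IntervalIntegrable.mono_fun (_root_.intervalIntegrable_const (c := C))
  · exact hm.aestronglyMeasurable
  · exact Filter.Eventually.of_forall fun t => by
      simpa [Real.norm_eq_abs] using (hb t).trans (le_abs_self C)

lemma measurable_prod_rademacher (S : Finset ℕ) :
    Measurable fun t => ∏ j ∈ S, rademacher j t :=
  Finset.measurable_prod S fun j _ => measurable_rademacher j

lemma abs_prod_rademacher (S : Finset ℕ) (t : ℝ) :
    |∏ j ∈ S, rademacher j t| ≤ 1 := by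
  rw [Finset.abs_prod]
  exact Finset.prod_le_one (fun j _ => abs_nonneg _) (fun j _ => abs_rademacher j t)

lemma intervalIntegrable_prod_rademacher (S : Finset ℕ) (a b : ℝ) :
    IntervalIntegrable (fun t => ∏ j ∈ S, rademacher j t) volume a b :=
  intervalIntegrable_of_bounded (measurable_prod_rademacher S) (abs_prod_rademacher S) a b

lemma ae_ne_half : ∀ᵐ t : ℝ, t ≠ 1/2 := by
  have : (volume ({1/2} : Set ℝ)) = 0 := measure_singleton _
  filter_upwards [measure_eq_zero_iff_ae_notMem.mp this] with t ht
  simpa using ht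

lemma integral_prod_rademacher_zero :
    ∀ (n : ℕ) (S : Finset ℕ), S.Nonempty → (∀ j ∈ S, j < n) →
      ∫ t in (0:ℝ)..1, ∏ j ∈ S, rademacher j t = 0 := by
  intro n
  induction n with
  | zero => intro S hS hlt; obtain ⟨j, hj⟩ := hS; exact absurd (hlt j hj) (by omega)
  | succ n ih =>
    intro S hS hlt
    by_cases h0 : 0 ∈ S
    · -- S = insert 0 T
      set T := S.erase 0 with hT
      set h : ℝ → ℝ := fun t => ∏ j ∈ T, rademacher j t with hh
      have hsplit : ∀ t, ∏ j ∈ S, rademacher j t = r0 t * h t := by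
        intro t
        rw [hh, ← Finset.prod_erase_mul S _ h0, ← hT]
        simp [rademacher, mul_comm]
      have hhalf : ∀ t, h (t + 1/2) = h t := by
        intro t
        refine Finset.prod_congr rfl fun j hj => ?_
        exact rademacher_add_half (Finset.ne_of_mem_erase hj) t
      have hmeas : Measurable h := measurable_prod_rademacher T
      have habs : ∀ t, |h t| ≤ 1 := abs_prod_rademacher T
      have hint : ∀ a b : ℝ, IntervalIntegrable (fun t => r0 t * h t) volume a b := by
        intro a b
        refine intervalIntegrable_of_bounded (measurable_r0.mul hmeas) (C := 1) ?_ a b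
        intro t
        simp only [Pi.mul_apply]
        rw [abs_mul]
        calc |r0 t| * |h t| ≤ 1 * 1 :=
              mul_le_mul (abs_r0 t) (habs t) (abs_nonneg _) zero_le_one
        _ = 1 := one_mul 1
      have e1 : ∫ t in (0:ℝ)..(1/2), r0 t * h t = ∫ t in (0:ℝ)..(1/2), h t := by
        apply intervalIntegral.integral_congr_ae
        filter_upwards [ae_ne_half] with t ht htmem
        rw [uIoc_of_le (by norm_num : (0:ℝ) ≤ 1/2)] at htmem
        rw [r0_of_lt_half (le_of_lt htmem.1) (lt_of_le_of_ne htmem.2 ht), one_mul]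
      have e2 : ∫ t in (1/2:ℝ)..1, r0 t * h t = ∫ t in (0:ℝ)..(1/2), (-1) * h t := by
        have := integral_comp_add_right (a := (0:ℝ)) (b := 1/2)
          (f := fun t => r0 t * h t) (1/2)
        norm_num at this
        rw [← this]
        apply intervalIntegral.integral_congr_ae
        filter_upwards [ae_ne_half] with t ht htmem
        rw [uIoc_of_le (by norm_num : (0:ℝ) ≤ 1/2)] at htmem
        rw [hhalf, r0_of_half_le (by linarith [htmem.1])
          (by have := lt_of_le_of_ne htmem.2 ht; linarith)]
      have := integral_add_adjacent_intervals (hint 0 (1/2)) (hint (1/2) 1)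
      rw [intervalIntegral.integral_congr (g := fun t => r0 t * h t)
        (fun t _ => hsplit t), ← this, e1, e2]
      simp
    · -- shift down, 0 ∉ S
      set S' := S.image (· - 1) with hS'
      have hptw : ∀ t, ∏ j ∈ S, rademacher j t = ∏ j ∈ S', rademacher j (2 * t) := by
        intro t
        rw [hS', Finset.prod_image]
        · refine Finset.prod_congr rfl fun j hj => ?_
          obtain ⟨k, rfl⟩ := Nat.exists_eq_succ_of_ne_zero (fun hc => h0 (hc ▸ hj))
          unfold rademacher
          congr 1
          simp [pow_succ]
          ring
        · intro a ha b hb hab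
          have ha0 : a ≠ 0 := fun hc => h0 (hc ▸ ha)
          have hb0 : b ≠ 0 := fun hc => h0 (hc ▸ hb)
          simp only at hab
          omega
      have hS'ne : S'.Nonempty := hS.image _
      have hS'lt : ∀ j ∈ S', j < n := by
        intro j hj
        rw [hS', Finset.mem_image] at hj
        obtain ⟨a, ha, rfl⟩ := hj
        have := hlt a ha
        have ha0 : a ≠ 0 := fun hc => h0 (hc ▸ ha)
        omega
      have hper : ∀ t, (∏ j ∈ S', rademacher j (t + 1)) = ∏ j ∈ S', rademacher j t := by
        intro t
        exact Finset.prod_congr rfl fun j _ => rademacher_periodic j t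
      have key := ih S' hS'ne hS'lt
      calc ∫ t in (0:ℝ)..1, ∏ j ∈ S, rademacher j t
          = ∫ t in (0:ℝ)..1, ∏ j ∈ S', rademacher j (2 * t) :=
            intervalIntegral.integral_congr (fun t _ => hptw t)
        _ = (2:ℝ)⁻¹ • ∫ t in (0:ℝ)..2, ∏ j ∈ S', rademacher j t := by
            rw [integral_comp_mul_left (fun t => ∏ j ∈ S', rademacher j t)
              (two_ne_zero)]
            norm_num
        _ = 0 := by
            have hadd := integral_add_adjacent_intervals
              (intervalIntegrable_prod_rademacher S' 0 1)
              (intervalIntegrable_prod_rademacher S' 1 2)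
            have h12 : ∫ t in (1:ℝ)..2, ∏ j ∈ S', rademacher j t
                = ∫ t in (0:ℝ)..1, ∏ j ∈ S', rademacher j t := by
              have := integral_comp_add_right (a := (0:ℝ)) (b := 1)
                (f := fun t => ∏ j ∈ S', rademacher j t) 1
              norm_num at this
              rw [← this]
              exact intervalIntegral.integral_congr (fun t _ => hper t)
            rw [← hadd, h12, key]
            norm_num

lemma rademacher_sq (j : ℕ) (t : ℝ) : rademacher j t * rademacher j t = 1 := by
  unfold rademacher r0; split <;> norm_num

lemma integral_prod_rademacher (S : Finset ℕ) (hS : S.Nonempty) :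
    ∫ t in (0:ℝ)..1, ∏ j ∈ S, rademacher j t = 0 :=
  integral_prod_rademacher_zero (S.sup id + 1) S hS
    (fun j hj => Nat.lt_succ_of_le (Finset.le_sup (f := id) hj))

lemma integral_rademacher_pair (a b : ℕ) :
    ∫ t in (0:ℝ)..1, rademacher a t * rademacher b t = if a = b then 1 else 0 := by
  rcases eq_or_ne a b with rfl | hab
  · simp only [if_pos rfl]
    rw [intervalIntegral.integral_congr (g := fun _ => (1:ℝ))
      (fun t _ => rademacher_sq a t)]
    simp
  · simp only [if_neg hab]
    rw [intervalIntegral.integral_congr (g := fun t => ∏ j ∈ ({a, b} : Finset ℕ), rademacher j t)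
      (fun t _ => (Finset.prod_pair hab).symm)]
    exact integral_prod_rademacher _ ⟨a, by simp⟩

lemma integral_rademacher_quad (a b c d : ℕ) :
    ∫ t in (0:ℝ)..1, rademacher a t * rademacher b t * rademacher c t * rademacher d t =
      if (a = b ∧ c = d) ∨ (a = c ∧ b = d) ∨ (a = d ∧ b = c) then 1 else 0 := by
  rcases eq_or_ne a b with rfl | hab
  · -- a = b : integrand = r_c r_d
    rw [intervalIntegral.integral_congr (g := fun t => rademacher c t * rademacher d t)
      (fun t _ => by simp only; rw [rademacher_sq, one_mul]), integral_rademacher_pair]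
    rcases eq_or_ne c d with rfl | hcd
    · simp
    · simp only [if_neg hcd]
      rw [if_neg (by omega)]
  · rcases eq_or_ne a c with rfl | hac
    · -- a = c
      rw [intervalIntegral.integral_congr (g := fun t => rademacher b t * rademacher d t)
        (fun t _ => by simp only; rw [show rademacher a t * rademacher b t * rademacher a t * rademacher d t = (rademacher a t * rademacher a t) * (rademacher b t * rademacher d t) by ring, rademacher_sq, one_mul]), integral_rademacher_pair]
      rcases eq_or_ne b d with rfl | hbd
      · rw [if_pos rfl, if_pos (by omega)]
      · simp only [if_neg hbd]
        rw [if_neg (by omega)]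
    · rcases eq_or_ne a d with rfl | had
      · -- a = d
        rw [intervalIntegral.integral_congr (g := fun t => rademacher b t * rademacher c t)
          (fun t _ => by simp only; rw [show rademacher a t * rademacher b t * rademacher c t * rademacher a t = (rademacher a t * rademacher a t) * (rademacher b t * rademacher c t) by ring, rademacher_sq, one_mul]), integral_rademacher_pair]
        rcases eq_or_ne b c with rfl | hbc
        · rw [if_pos rfl, if_pos (by omega)]
        · simp only [if_neg hbc]
          rw [if_neg (by omega)]
      · -- a distinct from b, c, d
        rw [if_neg (by omega)]
        rcases eq_or_ne b c with rfl | hbc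
        · rw [intervalIntegral.integral_congr (g := fun t => rademacher a t * rademacher d t)
            (fun t _ => by simp only; rw [show rademacher a t * rademacher b t * rademacher b t * rademacher d t = (rademacher b t * rademacher b t) * (rademacher a t * rademacher d t) by ring, rademacher_sq, one_mul]), integral_rademacher_pair, if_neg had]
        · rcases eq_or_ne b d with rfl | hbd
          · rw [intervalIntegral.integral_congr (g := fun t => rademacher a t * rademacher c t)
              (fun t _ => by simp only; rw [show rademacher a t * rademacher b t * rademacher c t * rademacher b t = (rademacher b t * rademacher b t) * (rademacher a t * rademacher c t) by ring, rademacher_sq, one_mul]), integral_rademacher_pair, if_neg hac]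
          · rcases eq_or_ne c d with rfl | hcd
            · rw [intervalIntegral.integral_congr (g := fun t => rademacher a t * rademacher b t)
                (fun t _ => by simp only; rw [show rademacher a t * rademacher b t * rademacher c t * rademacher c t = (rademacher c t * rademacher c t) * (rademacher a t * rademacher b t) by ring, rademacher_sq, one_mul]), integral_rademacher_pair, if_neg hab]
            · -- all distinct
              rw [intervalIntegral.integral_congr
                (g := fun t => ∏ j ∈ ({a, b, c, d} : Finset ℕ), rademacher j t)
                (fun t _ => ?_)]
              · exact integral_prod_rademacher _ ⟨a, by simp⟩
              · simp only
                rw [Finset.prod_insert (by simp [hab, hac, had]),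
                  Finset.prod_insert (by simp [hbc, hbd]),
                  Finset.prod_insert (by simp [hcd]), Finset.prod_singleton]
                ring

lemma normSq_expand (N : ℕ) (d : ℕ → ℂ) (t : ℝ) :
    ‖∑ j ∈ Finset.range N, d j * (rademacher j t : ℂ)‖ ^ 2 =
      ∑ p ∈ Finset.range N ×ˢ Finset.range N,
        (d p.1 * starRingEnd ℂ (d p.2)).re * (rademacher p.1 t * rademacher p.2 t) := by
  set F := ∑ j ∈ Finset.range N, d j * (rademacher j t : ℂ) with hF
  have h1 : (‖F‖ : ℝ) ^ 2 = (F * starRingEnd ℂ F).re := by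
    rw [Complex.mul_conj]
    simp [Complex.normSq_eq_norm_sq, ← Complex.ofReal_pow]
  have h2 : F * starRingEnd ℂ F =
      ∑ p ∈ Finset.range N ×ˢ Finset.range N,
        (d p.1 * starRingEnd ℂ (d p.2)) * ((rademacher p.1 t * rademacher p.2 t : ℝ) : ℂ) := by
    rw [hF, map_sum, Finset.sum_mul_sum, ← Finset.sum_product']
    refine Finset.sum_congr rfl fun p _ => ?_
    rw [map_mul, Complex.conj_ofReal]
    push_cast
    ring
  rw [h1, h2, Complex.re_sum]
  refine Finset.sum_congr rfl fun p _ => ?_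
  simp [Complex.mul_re]

lemma intervalIntegrable_pair (w : ℝ) (a b : ℕ) :
    IntervalIntegrable (fun t => w * (rademacher a t * rademacher b t)) volume 0 1 := by
  refine intervalIntegrable_of_bounded
    (measurable_const.mul ((measurable_rademacher a).mul (measurable_rademacher b)))
    (C := |w|) (fun t => ?_) 0 1
  simp only [Pi.mul_apply]
  rw [abs_mul, abs_mul]
  calc |w| * (|rademacher a t| * |rademacher b t|) ≤ |w| * (1 * 1) := by
        apply mul_le_mul_of_nonneg_left _ (abs_nonneg w)
        exact mul_le_mul (abs_rademacher a t) (abs_rademacher b t) (abs_nonneg _) zero_le_one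
  _ = |w| := by ring

set_option maxHeartbeats 1000000 in
lemma integral_norm_sq (N : ℕ) (d : ℕ → ℂ) :
    ∫ t in (0:ℝ)..1, ‖∑ j ∈ Finset.range N, d j * (rademacher j t : ℂ)‖ ^ 2 =
      ∑ j ∈ Finset.range N, ‖d j‖ ^ 2 := by
  rw [intervalIntegral.integral_congr (g := fun t =>
      ∑ p ∈ Finset.range N ×ˢ Finset.range N,
        (d p.1 * starRingEnd ℂ (d p.2)).re * (rademacher p.1 t * rademacher p.2 t))
      (fun t _ => normSq_expand N d t)]
  rw [intervalIntegral.integral_finset_sum (μ := MeasureTheory.volume) (a := 0) (b := 1)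
    (s := Finset.range N ×ˢ Finset.range N)
    (f := fun (p : ℕ × ℕ) (t : ℝ) =>
      (d p.1 * starRingEnd ℂ (d p.2)).re * (rademacher p.1 t * rademacher p.2 t))
    (fun p _ => intervalIntegrable_pair _ p.1 p.2)]
  have : ∀ p : ℕ × ℕ, (∫ t in (0:ℝ)..1,
      (d p.1 * starRingEnd ℂ (d p.2)).re * (rademacher p.1 t * rademacher p.2 t)) =
      (d p.1 * starRingEnd ℂ (d p.2)).re * (if p.1 = p.2 then 1 else 0) := by
    intro p
    rw [intervalIntegral.integral_const_mul, integral_rademacher_pair]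
  rw [Finset.sum_congr rfl (fun p _ => this p), Finset.sum_product]
  refine Finset.sum_congr rfl fun a ha => ?_
  rw [Finset.sum_congr rfl (fun b _ => by rw [mul_ite, mul_one, mul_zero]),
    Finset.sum_ite_eq (Finset.range N) a, if_pos ha, Complex.mul_conj]
  simp [Complex.normSq_eq_norm_sq, ← Complex.ofReal_pow]

lemma intervalIntegrable_quad (w1 w2 : ℝ) (a b c e : ℕ) :
    IntervalIntegrable (fun t => (w1 * (rademacher a t * rademacher b t)) *
      (w2 * (rademacher c t * rademacher e t))) volume 0 1 := by
  refine intervalIntegrable_of_bounded ?_ (C := |w1| * |w2|) (fun t => ?_) 0 1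
  · exact (measurable_const.mul ((measurable_rademacher a).mul (measurable_rademacher b))).mul
      (measurable_const.mul ((measurable_rademacher c).mul (measurable_rademacher e)))
  · rw [abs_mul, abs_mul, abs_mul, abs_mul, abs_mul]
    have h1 := abs_rademacher a t; have h2 := abs_rademacher b t
    have h3 := abs_rademacher c t; have h4 := abs_rademacher e t
    have n1 := abs_nonneg (rademacher a t); have n2 := abs_nonneg (rademacher b t)
    have n3 := abs_nonneg (rademacher c t); have n4 := abs_nonneg (rademacher e t)
    have nw1 := abs_nonneg w1; have nw2 := abs_nonneg w2
    have m12 : |rademacher a t| * |rademacher b t| ≤ 1 := by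
      simpa using mul_le_mul h1 h2 n2 zero_le_one
    have m34 : |rademacher c t| * |rademacher e t| ≤ 1 := by
      simpa using mul_le_mul h3 h4 n4 zero_le_one
    calc |w1| * (|rademacher a t| * |rademacher b t|) *
          (|w2| * (|rademacher c t| * |rademacher e t|))
        = (|w1| * |w2|) * ((|rademacher a t| * |rademacher b t|) *
            (|rademacher c t| * |rademacher e t|)) := by ring
      _ ≤ (|w1| * |w2|) * 1 := by
          refine mul_le_mul_of_nonneg_left ?_ (mul_nonneg nw1 nw2)
          simpa using mul_le_mul m12 m34 (mul_nonneg n3 n4) zero_le_one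
      _ = |w1| * |w2| := mul_one _

lemma abs_w_le (d : ℕ → ℂ) (a b : ℕ) :
    |(d a * starRingEnd ℂ (d b)).re| ≤ ‖d a‖ * ‖d b‖ := by
  calc |(d a * starRingEnd ℂ (d b)).re| ≤ ‖d a * starRingEnd ℂ (d b)‖ :=
        Complex.abs_re_le_norm _
  _ = ‖d a‖ * ‖d b‖ := by
      rw [norm_mul, Complex.norm_conj]

set_option maxHeartbeats 1000000 in
lemma integral_norm_pow4_le (N : ℕ) (d : ℕ → ℂ) :
    ∫ t in (0:ℝ)..1, ‖∑ j ∈ Finset.range N, d j * (rademacher j t : ℂ)‖ ^ 4 ≤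
      3 * (∑ j ∈ Finset.range N, ‖d j‖ ^ 2) ^ 2 := by
  classical
  set s := Finset.range N with hs
  set P := s ×ˢ s with hP
  set w : ℕ × ℕ → ℝ := fun p => (d p.1 * starRingEnd ℂ (d p.2)).re with hw
  set e : ℕ → ℝ := fun j => ‖d j‖ with he
  -- pointwise expansion of the fourth power
  have hpt : ∀ t : ℝ, ‖∑ j ∈ Finset.range N, d j * (rademacher j t : ℂ)‖ ^ 4 =
      ∑ r ∈ P ×ˢ P, (w r.1 * (rademacher r.1.1 t * rademacher r.1.2 t)) *
        (w r.2 * (rademacher r.2.1 t * rademacher r.2.2 t)) := by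
    intro t
    have : ‖∑ j ∈ Finset.range N, d j * (rademacher j t : ℂ)‖ ^ 4 =
        (‖∑ j ∈ Finset.range N, d j * (rademacher j t : ℂ)‖ ^ 2) ^ 2 := by ring
    rw [this, normSq_expand N d t, sq, Finset.sum_mul_sum, ← Finset.sum_product']
  rw [intervalIntegral.integral_congr (fun t _ => hpt t)]
  rw [intervalIntegral.integral_finset_sum (μ := MeasureTheory.volume) (a := 0) (b := 1)
    (s := P ×ˢ P)
    (f := fun (r : (ℕ × ℕ) × ℕ × ℕ) (t : ℝ) =>
      (w r.1 * (rademacher r.1.1 t * rademacher r.1.2 t)) *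
        (w r.2 * (rademacher r.2.1 t * rademacher r.2.2 t)))
    (fun r _ => intervalIntegrable_quad _ _ _ _ _ _)]
  -- evaluate each integral
  have hval : ∀ r : (ℕ × ℕ) × ℕ × ℕ,
      (∫ t in (0:ℝ)..1, (w r.1 * (rademacher r.1.1 t * rademacher r.1.2 t)) *
        (w r.2 * (rademacher r.2.1 t * rademacher r.2.2 t))) =
      (w r.1 * w r.2) * (if (r.1.1 = r.1.2 ∧ r.2.1 = r.2.2) ∨ (r.1.1 = r.2.1 ∧ r.1.2 = r.2.2)
        ∨ (r.1.1 = r.2.2 ∧ r.1.2 = r.2.1) then 1 else 0) := by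
    intro r
    rw [intervalIntegral.integral_congr (g := fun t => (w r.1 * w r.2) *
      (rademacher r.1.1 t * rademacher r.1.2 t * rademacher r.2.1 t * rademacher r.2.2 t))
      (fun t _ => by ring)]
    rw [intervalIntegral.integral_const_mul, integral_rademacher_quad]
  rw [Finset.sum_congr rfl (fun r _ => hval r)]
  -- bound each term by three indicator terms
  have hterm : ∀ r ∈ P ×ˢ P,
      (w r.1 * w r.2) * (if (r.1.1 = r.1.2 ∧ r.2.1 = r.2.2) ∨ (r.1.1 = r.2.1 ∧ r.1.2 = r.2.2)
        ∨ (r.1.1 = r.2.2 ∧ r.1.2 = r.2.1) then 1 else 0) ≤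
      (if r.1.1 = r.1.2 ∧ r.2.1 = r.2.2 then e r.1.1 * e r.1.2 * (e r.2.1 * e r.2.2) else 0) +
      (if r.1.1 = r.2.1 ∧ r.1.2 = r.2.2 then e r.1.1 * e r.1.2 * (e r.2.1 * e r.2.2) else 0) +
      (if r.1.1 = r.2.2 ∧ r.1.2 = r.2.1 then e r.1.1 * e r.1.2 * (e r.2.1 * e r.2.2) else 0) := by
    intro r _
    have hE : w r.1 * w r.2 ≤ e r.1.1 * e r.1.2 * (e r.2.1 * e r.2.2) := by
      calc w r.1 * w r.2 ≤ |w r.1 * w r.2| := le_abs_self _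
      _ = |w r.1| * |w r.2| := abs_mul _ _
      _ ≤ (e r.1.1 * e r.1.2) * (e r.2.1 * e r.2.2) :=
          mul_le_mul (abs_w_le d _ _) (abs_w_le d _ _) (abs_nonneg _)
            (mul_nonneg (norm_nonneg _) (norm_nonneg _))
    have hE0 : 0 ≤ e r.1.1 * e r.1.2 * (e r.2.1 * e r.2.2) :=
      mul_nonneg (mul_nonneg (norm_nonneg _) (norm_nonneg _))
        (mul_nonneg (norm_nonneg _) (norm_nonneg _))
    split_ifs <;> first | linarith | (exfalso; tauto)
  refine le_trans (Finset.sum_le_sum hterm) ?_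
  rw [Finset.sum_add_distrib, Finset.sum_add_distrib]
  -- now compute the three sums
  have key2 : (∑ j ∈ s, ‖d j‖ ^ 2) ^ 2 = ∑ p ∈ P, e p.1 ^ 2 * e p.2 ^ 2 := by
    rw [sq, Finset.sum_mul_sum, hP, ← Finset.sum_product']
  have diag : ∑ p ∈ P, (if p.1 = p.2 then e p.1 * e p.2 else 0) = ∑ a ∈ s, e a ^ 2 := by
    rw [hP, Finset.sum_product]
    refine Finset.sum_congr rfl fun a ha => ?_
    rw [Finset.sum_ite_eq s a (fun b => e a * e b), if_pos ha, sq]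
  have S1 : ∑ r ∈ P ×ˢ P, (if r.1.1 = r.1.2 ∧ r.2.1 = r.2.2
      then e r.1.1 * e r.1.2 * (e r.2.1 * e r.2.2) else 0) =
      (∑ j ∈ s, ‖d j‖ ^ 2) ^ 2 := by
    rw [Finset.sum_product]
    have : ∀ p ∈ P, ∑ q ∈ P, (if p.1 = p.2 ∧ q.1 = q.2
        then e p.1 * e p.2 * (e q.1 * e q.2) else 0) =
        (if p.1 = p.2 then e p.1 * e p.2 else 0) *
          ∑ q ∈ P, (if q.1 = q.2 then e q.1 * e q.2 else 0) := by
      intro p _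
      rw [Finset.mul_sum]
      refine Finset.sum_congr rfl fun q _ => ?_
      by_cases h1 : p.1 = p.2 <;> by_cases h2 : q.1 = q.2 <;>
        simp [h1, h2]
    rw [Finset.sum_congr rfl this, ← Finset.sum_mul, diag, sq]
  have S2 : ∑ r ∈ P ×ˢ P, (if r.1.1 = r.2.1 ∧ r.1.2 = r.2.2
      then e r.1.1 * e r.1.2 * (e r.2.1 * e r.2.2) else 0) =
      (∑ j ∈ s, ‖d j‖ ^ 2) ^ 2 := by
    rw [Finset.sum_product, key2]
    refine Finset.sum_congr rfl fun p hp => ?_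
    have : ∀ q : ℕ × ℕ, (p.1 = q.1 ∧ p.2 = q.2) ↔ p = q := fun q => (Prod.ext_iff).symm
    rw [Finset.sum_congr rfl (fun q _ => if_congr (this q) rfl rfl),
      Finset.sum_ite_eq P p (fun q => e p.1 * e p.2 * (e q.1 * e q.2)), if_pos hp]
    ring
  have S3 : ∑ r ∈ P ×ˢ P, (if r.1.1 = r.2.2 ∧ r.1.2 = r.2.1
      then e r.1.1 * e r.1.2 * (e r.2.1 * e r.2.2) else 0) =
      (∑ j ∈ s, ‖d j‖ ^ 2) ^ 2 := by
    rw [Finset.sum_product, key2]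
    refine Finset.sum_congr rfl fun p hp => ?_
    have hmem : (p.2, p.1) ∈ P := by
      rw [hP, Finset.mem_product] at hp ⊢; exact ⟨hp.2, hp.1⟩
    have : ∀ q : ℕ × ℕ, (p.1 = q.2 ∧ p.2 = q.1) ↔ (p.2, p.1) = q := by
      intro q; rw [Prod.ext_iff]; constructor <;> rintro ⟨h1, h2⟩ <;> exact ⟨h2, h1⟩
    rw [Finset.sum_congr rfl (fun q _ => if_congr (this q) rfl rfl),
      Finset.sum_ite_eq P (p.2, p.1) (fun q => e p.1 * e p.2 * (e q.1 * e q.2)), if_pos hmem]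
    ring
  rw [S1, S2, S3]
  ring_nf
  linarith [sq_nonneg (∑ j ∈ s, ‖d j‖ ^ 2)]

lemma cs_Ioc {u v : ℝ → ℝ} (hu : Measurable u) (hv : Measurable v)
    (h0u : ∀ t, 0 ≤ u t) (h0v : ∀ t, 0 ≤ v t) {Cu Cv : ℝ}
    (hbu : ∀ t, u t ≤ Cu) (hbv : ∀ t, v t ≤ Cv) :
    ∫ t in Ioc (0:ℝ) 1, u t * v t ≤
      Real.sqrt (∫ t in Ioc (0:ℝ) 1, (u t)^2) * Real.sqrt (∫ t in Ioc (0:ℝ) 1, (v t)^2) := by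
  have hfin : IsFiniteMeasure (volume.restrict (Ioc (0:ℝ) 1)) := by
    constructor
    rw [Measure.restrict_apply_univ]
    simp
  have hpq : Real.HolderConjugate 2 2 := by
    exact Real.HolderConjugate.two_two
  have hmu : MeasureTheory.MemLp u (ENNReal.ofReal 2) (volume.restrict (Ioc (0:ℝ) 1)) :=
    MemLp.of_bound hu.aestronglyMeasurable Cu
      (Filter.Eventually.of_forall fun t => by
        rw [Real.norm_eq_abs, abs_of_nonneg (h0u t)]; exact hbu t)
  have hmv : MeasureTheory.MemLp v (ENNReal.ofReal 2) (volume.restrict (Ioc (0:ℝ) 1)) :=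
    MemLp.of_bound hv.aestronglyMeasurable Cv
      (Filter.Eventually.of_forall fun t => by
        rw [Real.norm_eq_abs, abs_of_nonneg (h0v t)]; exact hbv t)
  have := MeasureTheory.integral_mul_le_Lp_mul_Lq_of_nonneg hpq
    (Filter.Eventually.of_forall h0u) (Filter.Eventually.of_forall h0v) hmu hmv
  have e2 : ∀ w : ℝ → ℝ, (∫ t in Ioc (0:ℝ) 1, w t ^ (2:ℝ)) = ∫ t in Ioc (0:ℝ) 1, (w t)^2 := by
    intro w
    refine integral_congr_ae (Filter.Eventually.of_forall fun t => ?_)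
    show w t ^ (2:ℝ) = w t ^ 2
    rw [show (2:ℝ) = ((2:ℕ):ℝ) by norm_num, Real.rpow_natCast]
  rw [e2, e2] at this
  calc ∫ t in Ioc (0:ℝ) 1, u t * v t
      ≤ (∫ t in Ioc (0:ℝ) 1, (u t)^2) ^ ((1:ℝ)/2) * (∫ t in Ioc (0:ℝ) 1, (v t)^2) ^ ((1:ℝ)/2) :=
        this
    _ = _ := by rw [← Real.sqrt_eq_rpow, ← Real.sqrt_eq_rpow]

/-- The Walsh functions in the Paley enumeration: `w_n` is the product of the
Rademacher functions indexed by the binary digits of `n` (so `w_0 = 1`). -/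
noncomputable def walsh (n : ℕ) (t : ℝ) : ℝ :=
  ∏ j ∈ Finset.range (n + 1), if n.testBit j then rademacher j t else 1

theorem stmt_14 (N : ℕ) (d : ℕ → ℂ) :
    Real.sqrt (∑ j ∈ Finset.range N, ‖d j‖ ^ 2) ≤
      2 * ∫ t in (0 : ℝ)..1, ‖∑ j ∈ Finset.range N, d j * (rademacher j t : ℂ)‖ := by
  classical
  set A : ℝ := ∑ j ∈ Finset.range N, ‖d j‖ ^ 2 with hA
  set f : ℝ → ℝ := fun t => ‖∑ j ∈ Finset.range N, d j * (rademacher j t : ℂ)‖ with hf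
  have hmf : Measurable f := by
    apply Measurable.norm
    exact Finset.measurable_sum (Finset.range N) fun j _ =>
      measurable_const.mul (Complex.measurable_ofReal.comp (measurable_rademacher j))
  have h0f : ∀ t, 0 ≤ f t := fun t => norm_nonneg _
  set B : ℝ := ∑ j ∈ Finset.range N, ‖d j‖ with hB
  have hbf : ∀ t, f t ≤ B := by
    intro t
    refine (norm_sum_le _ _).trans (Finset.sum_le_sum fun j _ => ?_)
    rw [norm_mul, Complex.norm_real]
    calc ‖d j‖ * |rademacher j t| ≤ ‖d j‖ * 1 :=
          mul_le_mul_of_nonneg_left (abs_rademacher j t) (norm_nonneg _)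
    _ = ‖d j‖ := mul_one _
  have hB0 : 0 ≤ B := Finset.sum_nonneg fun j _ => norm_nonneg _
  -- convert interval integral to set integral
  have hgoal : (∫ t in (0:ℝ)..1, ‖∑ j ∈ Finset.range N, d j * (rademacher j t : ℂ)‖) =
      ∫ t in Ioc (0:ℝ) 1, f t := intervalIntegral.integral_of_le zero_le_one
  rw [hgoal]
  set I1 : ℝ := ∫ t in Ioc (0:ℝ) 1, f t with hI1
  set I3 : ℝ := ∫ t in Ioc (0:ℝ) 1, f t ^ 3 with hI3
  set I4 : ℝ := ∫ t in Ioc (0:ℝ) 1, f t ^ 4 with hI4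
  have h2 : (∫ t in Ioc (0:ℝ) 1, f t ^ 2) = A := by
    rw [← intervalIntegral.integral_of_le zero_le_one]
    exact integral_norm_sq N d
  have h4 : I4 ≤ 3 * A ^ 2 := by
    rw [hI4, ← intervalIntegral.integral_of_le zero_le_one]
    exact integral_norm_pow4_le N d
  have hI1nn : 0 ≤ I1 := setIntegral_nonneg measurableSet_Ioc fun t _ => h0f t
  have hI3nn : 0 ≤ I3 := setIntegral_nonneg measurableSet_Ioc fun t _ =>
    pow_nonneg (h0f t) 3
  have hI4nn : 0 ≤ I4 := setIntegral_nonneg measurableSet_Ioc fun t _ =>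
    pow_nonneg (h0f t) 4
  have hA0 : 0 ≤ A := Finset.sum_nonneg fun j _ => sq_nonneg _
  -- Cauchy-Schwarz I :   A = ∫ f² ≤ √I1 * √I3
  have cs1 : A ≤ Real.sqrt I1 * Real.sqrt I3 := by
    have := cs_Ioc (u := fun t => Real.sqrt (f t)) (v := fun t => f t * Real.sqrt (f t))
      (hmf.sqrt) (hmf.mul hmf.sqrt)
      (fun t => Real.sqrt_nonneg _) (fun t => mul_nonneg (h0f t) (Real.sqrt_nonneg _))
      (Cu := Real.sqrt B) (Cv := B * Real.sqrt B)
      (fun t => Real.sqrt_le_sqrt (hbf t))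
      (fun t => mul_le_mul (hbf t) (Real.sqrt_le_sqrt (hbf t)) (Real.sqrt_nonneg _) hB0)
    have e1 : (∫ t in Ioc (0:ℝ) 1, Real.sqrt (f t) * (f t * Real.sqrt (f t))) =
        ∫ t in Ioc (0:ℝ) 1, f t ^ 2 := by
      refine integral_congr_ae (Filter.Eventually.of_forall fun t => ?_)
      show Real.sqrt (f t) * (f t * Real.sqrt (f t)) = f t ^ 2
      calc Real.sqrt (f t) * (f t * Real.sqrt (f t))
          = f t * (Real.sqrt (f t) * Real.sqrt (f t)) := by ring
        _ = f t * f t := by rw [Real.mul_self_sqrt (h0f t)]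
        _ = f t ^ 2 := by ring
    have e2 : (∫ t in Ioc (0:ℝ) 1, Real.sqrt (f t) ^ 2) = I1 := by
      refine integral_congr_ae (Filter.Eventually.of_forall fun t => ?_)
      show Real.sqrt (f t) ^ 2 = f t
      exact Real.sq_sqrt (h0f t)
    have e3 : (∫ t in Ioc (0:ℝ) 1, (f t * Real.sqrt (f t)) ^ 2) = I3 := by
      refine integral_congr_ae (Filter.Eventually.of_forall fun t => ?_)
      show (f t * Real.sqrt (f t)) ^ 2 = f t ^ 3
      calc (f t * Real.sqrt (f t)) ^ 2 = f t ^ 2 * (Real.sqrt (f t) ^ 2) := by ring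
        _ = f t ^ 2 * f t := by rw [Real.sq_sqrt (h0f t)]
        _ = f t ^ 3 := by ring
    rw [e1, e2, e3, h2] at this
    exact this
  -- Cauchy-Schwarz II :   I3 ≤ √A * √I4
  have cs2 : I3 ≤ Real.sqrt A * Real.sqrt I4 := by
    have := cs_Ioc (u := f) (v := fun t => f t ^ 2)
      hmf (hmf.pow_const 2) h0f (fun t => sq_nonneg _)
      (Cu := B) (Cv := B ^ 2) hbf
      (fun t => pow_le_pow_left₀ (h0f t) (hbf t) 2)
    have e1 : (∫ t in Ioc (0:ℝ) 1, f t * f t ^ 2) = I3 := by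
      refine integral_congr_ae (Filter.Eventually.of_forall fun t => ?_)
      show f t * f t ^ 2 = f t ^ 3
      ring
    have e3 : (∫ t in Ioc (0:ℝ) 1, (f t ^ 2) ^ 2) = I4 := by
      refine integral_congr_ae (Filter.Eventually.of_forall fun t => ?_)
      show (f t ^ 2) ^ 2 = f t ^ 4
      ring
    rw [e1, e3, h2] at this
    exact this
  -- combine
  rcases eq_or_lt_of_le hA0 with hA0' | hApos
  · rw [← hA0', Real.sqrt_zero]
    linarith
  · set sA : ℝ := Real.sqrt A with hsA
    have hsA2 : sA ^ 2 = A := Real.sq_sqrt hA0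
    have hsApos : 0 < sA := Real.sqrt_pos.mpr hApos
    have hI4' : Real.sqrt I4 ≤ Real.sqrt 3 * A := by
      calc Real.sqrt I4 ≤ Real.sqrt (3 * A ^ 2) := Real.sqrt_le_sqrt h4
        _ = Real.sqrt 3 * Real.sqrt (A ^ 2) := Real.sqrt_mul (by norm_num) _
        _ = Real.sqrt 3 * A := by rw [Real.sqrt_sq hA0]
    have hI3le : I3 ≤ sA * (Real.sqrt 3 * A) :=
      cs2.trans (mul_le_mul_of_nonneg_left hI4' (Real.sqrt_nonneg _))
    have hsq : A ^ 2 ≤ I1 * I3 := by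
      have h := pow_le_pow_left₀ hA0 cs1 2
      rwa [mul_pow, Real.sq_sqrt hI1nn, Real.sq_sqrt hI3nn] at h
    have key : A ^ 2 ≤ I1 * (sA * (Real.sqrt 3 * A)) :=
      hsq.trans (mul_le_mul_of_nonneg_left hI3le hI1nn)
    have hcancel : sA ≤ Real.sqrt 3 * I1 := by
      have hpos : 0 < sA * A := mul_pos hsApos hApos
      have hmain : sA * (sA * A) ≤ (Real.sqrt 3 * I1) * (sA * A) := by
        calc sA * (sA * A) = A ^ 2 := by rw [← hsA2]; ring
          _ ≤ I1 * (sA * (Real.sqrt 3 * A)) := key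
          _ = (Real.sqrt 3 * I1) * (sA * A) := by ring
      exact le_of_mul_le_mul_right hmain hpos
    have h3le2 : Real.sqrt 3 ≤ 2 := by
      nlinarith [Real.sq_sqrt (show (0:ℝ) ≤ 3 by norm_num), Real.sqrt_nonneg 3]
    calc sA ≤ Real.sqrt 3 * I1 := hcancel
      _ ≤ 2 * I1 := mul_le_mul_of_nonneg_right h3le2 hI1nn
end

section
/- Scalar Paley theorem for H¹ (Case 1, with constant 2): let (k_j)_{j≥0} be strongly lacunary (k_{j+1} > 2 k_j for all j) and let f ∈ L¹(T) be a trigonometric polynomial with f̂(n) = 0 for all n < 0. Then (∑_j |f̂(k_j)|²)^{1/2} ≤ 2 ‖f‖_{L¹(T)}. -/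
open MeasureTheory AddCircle Real

instance : Fact (0 < 2 * π) := ⟨by positivity⟩

noncomputable section PaleyAux

open Complex Metric Set Polynomial
open scoped InnerProductSpace

/-- complex square root via principal cpow -/
def csqrt (w : ℂ) : ℂ := w ^ (1/2 : ℂ)

lemma csqrt_mul_self (w : ℂ) : csqrt w * csqrt w = w := by
  by_cases hw : w = 0
  · simp [csqrt, hw, Complex.zero_cpow (by norm_num : (1/2:ℂ) ≠ 0)]
  · rw [csqrt, ← Complex.cpow_add _ _ hw]
    norm_num

lemma norm_csqrt (w : ℂ) : ‖csqrt w‖ = Real.sqrt ‖w‖ := by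
  have h : ((1/2 : ℂ)) = ((1/2 : ℝ) : ℂ) := by norm_num
  rw [csqrt, h, Complex.norm_cpow_real,
    Real.sqrt_eq_rpow]

lemma sq_norm_csqrt (w : ℂ) : ‖csqrt w‖ ^ 2 = ‖w‖ := by
  rw [norm_csqrt, Real.sq_sqrt (norm_nonneg w)]

lemma csqrt_ne_zero {w : ℂ} (hw : w ≠ 0) : csqrt w ≠ 0 := by
  intro h
  apply hw
  rw [← csqrt_mul_self w, h, mul_zero]

lemma continuousAt_csqrt {w : ℂ} (hw : 0 ≤ w.re) : ContinuousAt csqrt w :=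
  Complex.continuousAt_cpow_const_of_re_pos (Or.inl hw) (by norm_num)

lemma differentiableAt_csqrt {w : ℂ} (hw : 0 < w.re) : DifferentiableAt ℂ csqrt w :=
  (Complex.hasStrictDerivAt_cpow_const
    (Complex.mem_slitPlane_iff.2 (Or.inl hw))).hasDerivAt.differentiableAt


/-- the `g`-side factor for root `α` -/
def gfac (α z : ℂ) : ℂ :=
  if ‖α‖ < 1 then (z - α) / csqrt (1 - (starRingEnd ℂ) α * z)
  else csqrt (-α) * csqrt (1 - α⁻¹ * z)

/-- the `h`-side factor for root `α` -/
def hfac (α z : ℂ) : ℂ :=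
  if ‖α‖ < 1 then csqrt (1 - (starRingEnd ℂ) α * z)
  else csqrt (-α) * csqrt (1 - α⁻¹ * z)

lemma re_pos_of_lt_one {w : ℂ} (h : ‖w‖ < 1) : 0 < (1 - w).re := by
  have := Complex.abs_re_le_norm w
  simp only [Complex.sub_re, Complex.one_re]
  have : w.re ≤ ‖w‖ := (Complex.re_le_norm w)
  linarith

lemma re_nonneg_of_le_one {w : ℂ} (h : ‖w‖ ≤ 1) : 0 ≤ (1 - w).re := by
  simp only [Complex.sub_re, Complex.one_re]
  have : w.re ≤ ‖w‖ := (Complex.re_le_norm w)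
  linarith

lemma inner_base_ne_zero {α z : ℂ} (hα : ‖α‖ < 1) (hz : ‖z‖ ≤ 1) :
    1 - (starRingEnd ℂ) α * z ≠ 0 := by
  have h1 : ‖(starRingEnd ℂ) α * z‖ < 1 := by
    rw [norm_mul, RCLike.norm_conj]
    calc ‖α‖ * ‖z‖ ≤ ‖α‖ * 1 := by
          exact mul_le_mul_of_nonneg_left hz (norm_nonneg _)
      _ < 1 := by simpa using hα
  intro h
  rw [sub_eq_zero] at h
  rw [← h] at h1
  simp at h1

lemma gfac_mul_hfac {α z : ℂ} (hz : ‖z‖ ≤ 1) : gfac α z * hfac α z = z - α := by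
  by_cases hα : ‖α‖ < 1
  · rw [gfac, hfac, if_pos hα, if_pos hα]
    exact div_mul_cancel₀ _ (csqrt_ne_zero (inner_base_ne_zero hα hz))
  · rw [gfac, hfac, if_neg hα, if_neg hα]
    have hα0 : α ≠ 0 := by
      intro h; apply hα; simp [h]
    have : csqrt (-α) * csqrt (1 - α⁻¹ * z) * (csqrt (-α) * csqrt (1 - α⁻¹ * z))
        = (csqrt (-α) * csqrt (-α)) * (csqrt (1 - α⁻¹ * z) * csqrt (1 - α⁻¹ * z)) := by ring
    rw [this, csqrt_mul_self, csqrt_mul_self]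
    field_simp
    ring

lemma norm_one_sub_conj_mul {α z : ℂ} (hz : ‖z‖ = 1) :
    ‖1 - (starRingEnd ℂ) α * z‖ = ‖z - α‖ := by
  have h1 : ‖1 - (starRingEnd ℂ) α * z‖ = ‖(starRingEnd ℂ) (1 - (starRingEnd ℂ) α * z)‖ :=
    (RCLike.norm_conj _).symm
  rw [h1]
  have h2 : (starRingEnd ℂ) (1 - (starRingEnd ℂ) α * z) = 1 - α * (starRingEnd ℂ) z := by
    simp [map_sub, map_mul]
  rw [h2]
  have h3 : z * (1 - α * (starRingEnd ℂ) z) = z - α := by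
    have hzz : z * (starRingEnd ℂ) z = 1 := by
      rw [Complex.mul_conj]
      norm_cast
      rw [Complex.normSq_eq_norm_sq, hz, one_pow]
    calc z * (1 - α * (starRingEnd ℂ) z) = z - α * (z * (starRingEnd ℂ) z) := by ring
      _ = z - α := by rw [hzz, mul_one]
  calc ‖1 - α * (starRingEnd ℂ) z‖ = ‖z‖ * ‖1 - α * (starRingEnd ℂ) z‖ := by rw [hz, one_mul]
    _ = ‖z * (1 - α * (starRingEnd ℂ) z)‖ := (norm_mul _ _).symm
    _ = ‖z - α‖ := by rw [h3]

lemma sq_norm_hfac {α z : ℂ} (hz : ‖z‖ = 1) : ‖hfac α z‖ ^ 2 = ‖z - α‖ := by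
  by_cases hα : ‖α‖ < 1
  · rw [hfac, if_pos hα, sq_norm_csqrt, norm_one_sub_conj_mul hz]
  · rw [hfac, if_neg hα]
    have hα0 : α ≠ 0 := by intro h; apply hα; simp [h]
    rw [norm_mul, mul_pow, sq_norm_csqrt, sq_norm_csqrt, norm_neg, ← norm_mul]
    have : α * (1 - α⁻¹ * z) = -(z - α) := by field_simp; ring
    rw [this, norm_neg]

lemma sq_norm_gfac {α z : ℂ} (hz : ‖z‖ = 1) : ‖gfac α z‖ ^ 2 = ‖z - α‖ := by
  by_cases hα : ‖α‖ < 1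
  · rw [gfac, if_pos hα]
    have hne : ‖z - α‖ ≠ 0 := by
      intro h
      rw [norm_eq_zero, sub_eq_zero] at h
      rw [← h, hz] at hα
      exact lt_irrefl _ hα
    rw [norm_div, div_pow, sq_norm_csqrt, norm_one_sub_conj_mul hz,
      pow_two, mul_div_assoc, div_self hne, mul_one]
  · rw [gfac, if_neg hα]
    have := sq_norm_hfac (α := α) hz
    rw [hfac, if_neg hα] at this
    exact this

lemma continuousAt_hfac {α z : ℂ} (hz : ‖z‖ ≤ 1) : ContinuousAt (hfac α) z := by
  by_cases hα : ‖α‖ < 1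
  · have : hfac α = fun z => csqrt (1 - (starRingEnd ℂ) α * z) := by
      funext w; rw [hfac, if_pos hα]
    rw [this]
    have hre : 0 ≤ (1 - (starRingEnd ℂ) α * z).re := by
      apply re_nonneg_of_le_one
      rw [norm_mul, RCLike.norm_conj]
      calc ‖α‖ * ‖z‖ ≤ 1 * 1 :=
            mul_le_mul hα.le hz (norm_nonneg _) zero_le_one
        _ = 1 := one_mul 1
    have hlin : ContinuousAt (fun z : ℂ => 1 - (starRingEnd ℂ) α * z) z := by fun_prop
    exact ContinuousAt.comp (g := csqrt) (continuousAt_csqrt hre) hlin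
  · have : hfac α = fun z => csqrt (-α) * csqrt (1 - α⁻¹ * z) := by
      funext w; rw [hfac, if_neg hα]
    rw [this]
    have hα1 : 1 ≤ ‖α‖ := not_lt.1 hα
    apply ContinuousAt.mul continuousAt_const
    have hre : 0 ≤ (1 - α⁻¹ * z).re := by
      apply re_nonneg_of_le_one
      rw [norm_mul, norm_inv]
      calc ‖α‖⁻¹ * ‖z‖ ≤ 1 * 1 := by
            apply mul_le_mul _ hz (norm_nonneg _) zero_le_one
            exact inv_le_one_of_one_le₀ hα1
        _ = 1 := one_mul 1
    have hlin : ContinuousAt (fun z : ℂ => 1 - α⁻¹ * z) z := by fun_prop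
    exact ContinuousAt.comp (g := csqrt) (continuousAt_csqrt hre) hlin

lemma continuousAt_gfac {α z : ℂ} (hz : ‖z‖ ≤ 1) : ContinuousAt (gfac α) z := by
  by_cases hα : ‖α‖ < 1
  · have : gfac α = fun z => (z - α) / csqrt (1 - (starRingEnd ℂ) α * z) := by
      funext w; rw [gfac, if_pos hα]
    rw [this]
    have hre : 0 ≤ (1 - (starRingEnd ℂ) α * z).re := by
      apply re_nonneg_of_le_one
      rw [norm_mul, RCLike.norm_conj]
      calc ‖α‖ * ‖z‖ ≤ 1 * 1 :=
            mul_le_mul hα.le hz (norm_nonneg _) zero_le_one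
        _ = 1 := one_mul 1
    have hlin : ContinuousAt (fun z : ℂ => 1 - (starRingEnd ℂ) α * z) z := by fun_prop
    exact ContinuousAt.div (by fun_prop)
      (ContinuousAt.comp (g := csqrt) (continuousAt_csqrt hre) hlin)
      (csqrt_ne_zero (inner_base_ne_zero hα hz))
  · have : gfac α = hfac α := by
      funext w; rw [gfac, hfac, if_neg hα, if_neg hα]
    rw [this]
    exact continuousAt_hfac hz

lemma differentiableAt_hfac {α z : ℂ} (hz : ‖z‖ < 1) : DifferentiableAt ℂ (hfac α) z := by
  by_cases hα : ‖α‖ < 1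
  · have : hfac α = fun z => csqrt (1 - (starRingEnd ℂ) α * z) := by
      funext w; rw [hfac, if_pos hα]
    rw [this]
    have hre : 0 < (1 - (starRingEnd ℂ) α * z).re := by
      apply re_pos_of_lt_one
      rw [norm_mul, RCLike.norm_conj]
      calc ‖α‖ * ‖z‖ ≤ 1 * ‖z‖ :=
            mul_le_mul_of_nonneg_right hα.le (norm_nonneg _)
        _ < 1 := by simpa using hz
    have hlin : DifferentiableAt ℂ (fun z : ℂ => 1 - (starRingEnd ℂ) α * z) z := by fun_prop
    exact DifferentiableAt.comp (g := csqrt) z (differentiableAt_csqrt hre) hlin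
  · have : hfac α = fun z => csqrt (-α) * csqrt (1 - α⁻¹ * z) := by
      funext w; rw [hfac, if_neg hα]
    rw [this]
    have hα1 : 1 ≤ ‖α‖ := not_lt.1 hα
    apply DifferentiableAt.mul (differentiableAt_const _)
    have hre : 0 < (1 - α⁻¹ * z).re := by
      apply re_pos_of_lt_one
      rw [norm_mul, norm_inv]
      calc ‖α‖⁻¹ * ‖z‖ ≤ 1 * ‖z‖ := by
            apply mul_le_mul_of_nonneg_right _ (norm_nonneg _)
            exact inv_le_one_of_one_le₀ hα1
        _ < 1 := by simpa using hz
    have hlin : DifferentiableAt ℂ (fun z : ℂ => 1 - α⁻¹ * z) z := by fun_prop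
    exact DifferentiableAt.comp (g := csqrt) z (differentiableAt_csqrt hre) hlin

lemma differentiableAt_gfac {α z : ℂ} (hz : ‖z‖ < 1) : DifferentiableAt ℂ (gfac α) z := by
  by_cases hα : ‖α‖ < 1
  · have : gfac α = fun z => (z - α) / csqrt (1 - (starRingEnd ℂ) α * z) := by
      funext w; rw [gfac, if_pos hα]
    rw [this]
    have hre : 0 < (1 - (starRingEnd ℂ) α * z).re := by
      apply re_pos_of_lt_one
      rw [norm_mul, RCLike.norm_conj]
      calc ‖α‖ * ‖z‖ ≤ 1 * ‖z‖ :=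
            mul_le_mul_of_nonneg_right hα.le (norm_nonneg _)
        _ < 1 := by simpa using hz
    have hlin : DifferentiableAt ℂ (fun z : ℂ => 1 - (starRingEnd ℂ) α * z) z := by fun_prop
    exact DifferentiableAt.div (by fun_prop)
      (DifferentiableAt.comp (g := csqrt) z (differentiableAt_csqrt hre) hlin)
      (csqrt_ne_zero (inner_base_ne_zero hα hz.le))
  · have : gfac α = hfac α := by
      funext w; rw [gfac, hfac, if_neg hα, if_neg hα]
    rw [this]
    exact differentiableAt_hfac hz


lemma multiset_norm_prod (m : Multiset ℂ) : ‖m.prod‖ = (m.map (fun x => ‖x‖)).prod := by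
  induction m using Multiset.induction_on with
  | empty => simp
  | cons a s ih => simp [Multiset.prod_cons, ih]

lemma multiset_prod_sq (m : Multiset ℝ) : m.prod ^ 2 = (m.map (fun x => x ^ 2)).prod := by
  induction m using Multiset.induction_on with
  | empty => simp
  | cons a s ih => simp [Multiset.prod_cons, ih, mul_pow]

lemma continuousAt_multiset_prod (m : Multiset ℂ) (F : ℂ → ℂ → ℂ) {z : ℂ}
    (h : ∀ i ∈ m, ContinuousAt (F i) z) :
    ContinuousAt (fun w => (m.map (fun i => F i w)).prod) z := by
  induction m using Multiset.induction_on with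
  | empty => simpa using continuousAt_const
  | cons a s ih =>
      simp only [Multiset.map_cons, Multiset.prod_cons]
      exact (h a (Multiset.mem_cons_self a s)).mul
        (ih fun i hi => h i (Multiset.mem_cons_of_mem hi))

lemma differentiableAt_multiset_prod (m : Multiset ℂ) (F : ℂ → ℂ → ℂ) {z : ℂ}
    (h : ∀ i ∈ m, DifferentiableAt ℂ (F i) z) :
    DifferentiableAt ℂ (fun w => (m.map (fun i => F i w)).prod) z := by
  induction m using Multiset.induction_on with
  | empty => simpa using differentiableAt_const 1
  | cons a s ih =>
      simp only [Multiset.map_cons, Multiset.prod_cons]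
      exact (h a (Multiset.mem_cons_self a s)).mul
        (ih fun i hi => h i (Multiset.mem_cons_of_mem hi))

/-- the analytic factor `G` (Blaschke part times square root of outer part) -/
def Gfun (P : ℂ[X]) (z : ℂ) : ℂ :=
  csqrt P.leadingCoeff * (P.roots.map (fun α => gfac α z)).prod

def Hfun (P : ℂ[X]) (z : ℂ) : ℂ :=
  csqrt P.leadingCoeff * (P.roots.map (fun α => hfac α z)).prod

lemma eval_eq_prod (P : ℂ[X]) (z : ℂ) :
    P.eval z = P.leadingCoeff * (P.roots.map (fun α => z - α)).prod :=
  (IsAlgClosed.splits P).eval_eq_prod_roots z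

lemma Gfun_mul_Hfun (P : ℂ[X]) {z : ℂ} (hz : ‖z‖ ≤ 1) :
    Gfun P z * Hfun P z = P.eval z := by
  rw [Gfun, Hfun, eval_eq_prod]
  have h1 : csqrt P.leadingCoeff * (P.roots.map (fun α => gfac α z)).prod *
      (csqrt P.leadingCoeff * (P.roots.map (fun α => hfac α z)).prod)
      = (csqrt P.leadingCoeff * csqrt P.leadingCoeff) *
        ((P.roots.map (fun α => gfac α z)).prod * (P.roots.map (fun α => hfac α z)).prod) := by
    ring
  rw [h1, csqrt_mul_self, ← Multiset.prod_map_mul]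
  congr 1
  rw [Multiset.map_congr rfl (fun α _ => gfac_mul_hfac (α := α) hz)]

lemma sq_norm_Gfun (P : ℂ[X]) {z : ℂ} (hz : ‖z‖ = 1) :
    ‖Gfun P z‖ ^ 2 = ‖P.eval z‖ := by
  rw [Gfun, eval_eq_prod, norm_mul, mul_pow, sq_norm_csqrt, norm_mul,
    multiset_norm_prod, Multiset.map_map, multiset_prod_sq, Multiset.map_map,
    multiset_norm_prod, Multiset.map_map]
  congr 2
  exact Multiset.map_congr rfl (fun α _ => by
    simp only [Function.comp_apply]
    exact sq_norm_gfac (α := α) hz)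

lemma sq_norm_Hfun (P : ℂ[X]) {z : ℂ} (hz : ‖z‖ = 1) :
    ‖Hfun P z‖ ^ 2 = ‖P.eval z‖ := by
  rw [Hfun, eval_eq_prod, norm_mul, mul_pow, sq_norm_csqrt, norm_mul,
    multiset_norm_prod, Multiset.map_map, multiset_prod_sq, Multiset.map_map,
    multiset_norm_prod, Multiset.map_map]
  congr 2
  exact Multiset.map_congr rfl (fun α _ => by
    simp only [Function.comp_apply]
    exact sq_norm_hfac (α := α) hz)

lemma continuousAt_Gfun (P : ℂ[X]) {z : ℂ} (hz : ‖z‖ ≤ 1) : ContinuousAt (Gfun P) z := by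
  unfold Gfun
  exact continuousAt_const.mul
    (continuousAt_multiset_prod _ _ (fun i _ => continuousAt_gfac hz))

lemma continuousAt_Hfun (P : ℂ[X]) {z : ℂ} (hz : ‖z‖ ≤ 1) : ContinuousAt (Hfun P) z := by
  unfold Hfun
  exact continuousAt_const.mul
    (continuousAt_multiset_prod _ _ (fun i _ => continuousAt_hfac hz))

lemma differentiableAt_Gfun (P : ℂ[X]) {z : ℂ} (hz : ‖z‖ < 1) :
    DifferentiableAt ℂ (Gfun P) z := by
  unfold Gfun
  exact (differentiableAt_const _).mul
    (differentiableAt_multiset_prod _ _ (fun i _ => differentiableAt_gfac hz))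

lemma differentiableAt_Hfun (P : ℂ[X]) {z : ℂ} (hz : ‖z‖ < 1) :
    DifferentiableAt ℂ (Hfun P) z := by
  unfold Hfun
  exact (differentiableAt_const _).mul
    (differentiableAt_multiset_prod _ _ (fun i _ => differentiableAt_hfac hz))


lemma toCircle_coe_eq_exp (x : ℝ) :
    ((AddCircle.toCircle (x : AddCircle (2*π)) : Circle) : ℂ) = Complex.exp (x * Complex.I) := by
  have h1 : ((AddCircle.toCircle (x : AddCircle (2*π)) : Circle) : ℂ)
      = fourier 1 (x : AddCircle (2*π)) := (fourier_one).symm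
  rw [h1, fourier_coe_apply]
  congr 1
  have hπ : (π : ℂ) ≠ 0 := by
    simpa using Real.pi_ne_zero
  field_simp
  push_cast; ring

lemma fourier_coe_eq_exp (n : ℤ) (x : ℝ) :
    fourier n (x : AddCircle (2*π)) = Complex.exp (n * x * Complex.I) := by
  rw [fourier_coe_apply]
  congr 1
  have hπ : (π : ℂ) ≠ 0 := by simpa using Real.pi_ne_zero
  field_simp
  push_cast; ring

/-- Negative Fourier coefficients of the boundary value of an analytic function vanish. -/
lemma fourierCoeff_comp_toCircle_eq_zero {F : ℂ → ℂ}
    (hc : ∀ z : ℂ, ‖z‖ ≤ 1 → ContinuousAt F z)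
    (hd : ∀ z : ℂ, ‖z‖ < 1 → DifferentiableAt ℂ F z)
    {n : ℤ} (hn : n < 0) :
    fourierCoeff (fun x : AddCircle (2*π) => F (AddCircle.toCircle x)) n = 0 := by
  set m : ℕ := (-n-1).toNat with hm_def
  have hm : (m : ℤ) = -n - 1 := Int.toNat_of_nonneg (by omega)
  set Φ : ℂ → ℂ := fun z => F z * z ^ m with hΦ
  have contΦ : ContinuousOn Φ (closedBall (0:ℂ) 1) := by
    intro z hz
    rw [mem_closedBall_zero_iff] at hz
    exact ((hc z hz).mul (continuousAt_pow z m)).continuousWithinAt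
  have diffΦ : ∀ z ∈ ball (0:ℂ) 1 \ (∅ : Set ℂ), DifferentiableAt ℂ Φ z := by
    intro z hz
    rw [diff_empty, mem_ball_zero_iff] at hz
    exact (hd z hz).mul (differentiableAt_pow m)
  have hint : (∮ z in C((0:ℂ), 1), Φ z) = 0 :=
    Complex.circleIntegral_eq_zero_of_differentiable_on_off_countable zero_le_one
      Set.countable_empty contΦ diffΦ
  have hcirc : (∮ z in C((0:ℂ), 1), Φ z)
      = ∫ θ in (0:ℝ)..2*π, deriv (circleMap 0 1) θ • Φ (circleMap 0 1 θ) := rfl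
  -- pointwise identity
  have hpt : ∀ x : ℝ, fourier (-n) (x : AddCircle (2*π)) • F (AddCircle.toCircle (x : AddCircle (2*π)))
      = (-Complex.I) * (deriv (circleMap 0 1) x • Φ (circleMap 0 1 x)) := by
    intro x
    have hmap : circleMap 0 1 x = Complex.exp (x * Complex.I) := by
      rw [circleMap_zero]
      norm_num
    rw [deriv_circleMap, hmap, smul_eq_mul, smul_eq_mul, toCircle_coe_eq_exp,
      fourier_coe_eq_exp, hΦ]
    have hexp : Complex.exp (x * Complex.I) ^ m = Complex.exp (m * (x * Complex.I)) := by
      rw [← Complex.exp_nat_mul]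
    have hn' : ((-n : ℤ) : ℂ) = (m : ℂ) + 1 := by
      have h2 : ((m:ℤ) : ℂ) = ((-n - 1 : ℤ) : ℂ) := congrArg (fun z : ℤ => (z : ℂ)) hm
      push_cast at h2 ⊢
      linear_combination -h2
    calc Complex.exp (↑(-n) * ↑x * Complex.I) * F (Complex.exp (↑x * Complex.I))
        = Complex.exp (((m:ℂ) + 1) * (↑x * Complex.I)) * F (Complex.exp (↑x * Complex.I)) := by
          rw [← mul_assoc, hn']
      _ = Complex.exp ((m:ℂ) * (↑x * Complex.I)) * Complex.exp (↑x * Complex.I)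
            * F (Complex.exp (↑x * Complex.I)) := by
          rw [← Complex.exp_add]; ring_nf
      _ = -Complex.I * (Complex.exp (↑x * Complex.I) * Complex.I *
            (F (Complex.exp (↑x * Complex.I)) * Complex.exp (↑x * Complex.I) ^ m)) := by
          rw [hexp]; ring_nf; rw [Complex.I_sq]; ring
  rw [fourierCoeff_eq_intervalIntegral _ n 0, zero_add]
  have : (∫ x in (0:ℝ)..2*π, fourier (-n) (x : AddCircle (2*π)) •
      F (AddCircle.toCircle (x : AddCircle (2*π))))
      = ∫ x in (0:ℝ)..2*π, (-Complex.I) * (deriv (circleMap 0 1) x • Φ (circleMap 0 1 x)) := by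
    apply intervalIntegral.integral_congr
    intro x _
    exact hpt x
  rw [this, intervalIntegral.integral_const_mul, ← hcirc, hint, mul_zero, smul_zero]

variable {T : ℝ} [hT : Fact (0 < T)]

lemma cont_integrable {u : AddCircle T → ℂ} (hu : Continuous u) :
    Integrable u haarAddCircle :=
  hu.integrable_of_hasCompactSupport
    (IsCompact.of_isClosed_subset isCompact_univ (isClosed_tsupport u) (Set.subset_univ _))

lemma fourierCoeff_sub {u v : AddCircle T → ℂ} (hu : Continuous u) (hv : Continuous v) (n : ℤ) :
    fourierCoeff (fun x => u x - v x) n = fourierCoeff u n - fourierCoeff v n := by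
  unfold fourierCoeff
  rw [← integral_sub]
  · congr 1
    funext t
    simp [smul_eq_mul]
    ring
  · exact (cont_integrable (by fun_prop : Continuous fun t => fourier (-n) t * u t)).congr
      (Filter.Eventually.of_forall fun t => rfl)
  · exact (cont_integrable (by fun_prop : Continuous fun t => fourier (-n) t * v t)).congr
      (Filter.Eventually.of_forall fun t => rfl)

lemma continuous_eq_zero_of_fourierCoeff {u : AddCircle T → ℂ} (hu : Continuous u)
    (h : ∀ n : ℤ, fourierCoeff u n = 0) : ∀ x, u x = 0 := by
  let U : C(AddCircle T, ℂ) := ⟨u, hu⟩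
  have hrepr : fourierBasis.repr (ContinuousMap.toLp (E := ℂ) 2 haarAddCircle ℂ U) = 0 := by
    ext i
    rw [fourierBasis_repr, fourierCoeff_toLp U i]
    show fourierCoeff u i = _
    simpa using h i
  have hL : ContinuousMap.toLp (E := ℂ) 2 haarAddCircle ℂ U = 0 := by
    apply fourierBasis.repr.injective
    rw [hrepr, map_zero]
  have hU : U = 0 := by
    apply ContinuousMap.toLp_injective (E := ℂ) (p := (2 : ENNReal)) (𝕜 := ℂ) haarAddCircle
    rw [hL]
    simp
  intro x
  exact congrFun (congrArg (fun (F : C(AddCircle T, ℂ)) => (F : AddCircle T → ℂ)) hU) x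

lemma sum_sq_fourierCoeff_le {g : AddCircle T → ℂ} (hg : Continuous g) (S : Finset ℤ) :
    ∑ i ∈ S, ‖fourierCoeff g i‖ ^ 2 ≤ ∫ t, ‖g t‖ ^ 2 ∂haarAddCircle := by
  let G : C(AddCircle T, ℂ) := ⟨g, hg⟩
  set gL := ContinuousMap.toLp (E := ℂ) 2 haarAddCircle ℂ G with hgL
  have hcoeff : ∀ i : ℤ, fourierCoeff (gL : AddCircle T → ℂ) i = fourierCoeff g i :=
    fun i => fourierCoeff_toLp G i
  have hpars := tsum_sq_fourierCoeff gL
  have hsum : Summable (fun i : ℤ => ‖fourierCoeff (gL : AddCircle T → ℂ) i‖ ^ 2) := by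
    have hmem := lp.memℓp (fourierBasis.repr gL)
    rw [memℓp_gen_iff (by norm_num : 0 < (2 : ENNReal).toReal)] at hmem
    have h2 : ∀ i : ℤ, ‖fourierBasis.repr gL i‖ ^ (2 : ENNReal).toReal
        = ‖fourierCoeff (gL : AddCircle T → ℂ) i‖ ^ 2 := by
      intro i
      rw [fourierBasis_repr]
      norm_num
    exact (summable_congr h2).1 hmem
  have hae : ∫ t, ‖(gL : AddCircle T → ℂ) t‖ ^ 2 ∂haarAddCircle
      = ∫ t, ‖g t‖ ^ 2 ∂haarAddCircle := by
    apply integral_congr_ae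
    filter_upwards [ContinuousMap.coeFn_toLp (p := (2:ENNReal)) (μ := haarAddCircle) (𝕜 := ℂ) G]
      with t ht
    rw [ht]
    rfl
  calc ∑ i ∈ S, ‖fourierCoeff g i‖ ^ 2
      = ∑ i ∈ S, ‖fourierCoeff (gL : AddCircle T → ℂ) i‖ ^ 2 := by
        exact Finset.sum_congr rfl fun i _ => by rw [hcoeff]
    _ ≤ ∑' i, ‖fourierCoeff (gL : AddCircle T → ℂ) i‖ ^ 2 :=
        hsum.sum_le_tsum S (fun i _ => by positivity)
    _ = ∫ t, ‖(gL : AddCircle T → ℂ) t‖ ^ 2 ∂haarAddCircle := hpars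
    _ = ∫ t, ‖g t‖ ^ 2 ∂haarAddCircle := hae

lemma hasSum_fourierCoeff_mul {g h : AddCircle T → ℂ} (hg : Continuous g) (hh : Continuous h)
    (n : ℤ) :
    HasSum (fun i : ℤ => fourierCoeff g (n - i) * fourierCoeff h i)
      (fourierCoeff (fun x => g x * h x) n) := by
  have hu : Continuous (fun x : AddCircle T => (starRingEnd ℂ) (g x) * fourier n x) := by
    exact (Complex.continuous_conj.comp hg).mul (fourier n).continuous
  let U : C(AddCircle T, ℂ) := ⟨_, hu⟩
  let Hc : C(AddCircle T, ℂ) := ⟨h, hh⟩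
  set uL := ContinuousMap.toLp (E := ℂ) 2 haarAddCircle ℂ U with huL
  set hL := ContinuousMap.toLp (E := ℂ) 2 haarAddCircle ℂ Hc with hhL
  have key := fourierBasis.hasSum_inner_mul_inner uL hL
  -- identify the summands
  have h1 : ∀ i : ℤ, ⟪uL, fourierBasis i⟫_ℂ * ⟪fourierBasis i, hL⟫_ℂ
      = fourierCoeff g (n - i) * fourierCoeff h i := by
    intro i
    have e1 : ⟪fourierBasis i, hL⟫_ℂ = fourierCoeff h i := by
      rw [← fourierBasis.repr_apply_apply, fourierBasis_repr]
      exact fourierCoeff_toLp Hc i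
    have e2 : ⟪uL, fourierBasis i⟫_ℂ = fourierCoeff g (n - i) := by
      rw [← inner_conj_symm, ← fourierBasis.repr_apply_apply, fourierBasis_repr,
        fourierCoeff_toLp U i]
      -- conj (fourierCoeff U i) = fourierCoeff g (n - i)
      rw [fourierCoeff, fourierCoeff, ← integral_conj]
      apply integral_congr_ae
      apply Filter.Eventually.of_forall
      intro t
      show (starRingEnd ℂ) (fourier (-i) t • ((starRingEnd ℂ) (g t) * fourier n t))
          = fourier (-(n - i)) t • g t
      rw [smul_eq_mul, smul_eq_mul, map_mul, map_mul, ← fourier_neg, neg_neg,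
        Complex.conj_conj, ← fourier_neg]
      have : fourier (-(n-i)) t = fourier i t * fourier (-n) t := by
        rw [← fourier_add]
        congr 1
        ring
      rw [this]
      ring
    rw [e1, e2]
  -- identify the sum
  have h2 : ⟪uL, hL⟫_ℂ = fourierCoeff (fun x => g x * h x) n := by
    rw [MeasureTheory.L2.inner_def]
    rw [fourierCoeff]
    apply integral_congr_ae
    filter_upwards [ContinuousMap.coeFn_toLp (p := (2:ENNReal)) (μ := haarAddCircle) (𝕜 := ℂ) U,
      ContinuousMap.coeFn_toLp (p := (2:ENNReal)) (μ := haarAddCircle) (𝕜 := ℂ) Hc] with t htu hth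
    rw [RCLike.inner_apply, htu, hth]
    show h t * (starRingEnd ℂ) ((starRingEnd ℂ) (g t) * fourier n t)
        = fourier (-n) t • (g t * h t)
    rw [map_mul, Complex.conj_conj, ← fourier_neg, smul_eq_mul]
    ring
  rw [← h2]
  exact HasSum.congr_fun key fun i => (h1 i).symm

lemma fourier_natCast_eq_pow (n : ℕ) (x : AddCircle T) :
    fourier (n : ℤ) x = ((toCircle x : Circle) : ℂ) ^ n := by
  induction n with
  | zero => simpa using fourier_zero
  | succ m ih =>
      have : ((m + 1 : ℕ) : ℤ) = (m : ℤ) + 1 := by push_cast; ring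
      rw [this, fourier_add, ih, fourier_one, pow_succ]


lemma fourierCoeff_fourier' (n m : ℤ) :
    fourierCoeff (fun x : AddCircle T => fourier n x) m = if (n:ℤ) = m then 1 else 0 := by
  have h := orthonormal_iff_ite.mp (orthonormal_fourier (T := T)) m n
  rw [show fourierLp (T := T) 2 m = ContinuousMap.toLp (E := ℂ) 2 haarAddCircle ℂ (fourier m)
      from rfl,
    show fourierLp (T := T) 2 n = ContinuousMap.toLp (E := ℂ) 2 haarAddCircle ℂ (fourier n)
      from rfl, ContinuousMap.inner_toLp haarAddCircle (fourier m) (fourier n)] at h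
  have h2 : (∫ x : AddCircle T, (starRingEnd ℂ) (fourier m x) * fourier n x ∂haarAddCircle)
      = fourierCoeff (fun x : AddCircle T => fourier n x) m := by
    unfold fourierCoeff
    apply integral_congr_ae
    apply Filter.Eventually.of_forall
    intro t
    simp only [smul_eq_mul, ← fourier_neg]
  simp only [mul_comm (fourier n _) _] at h
  rw [h2] at h
  rw [h]
  simp only [eq_comm]

/-- reconstruction of a trigonometric polynomial with nonnegative spectrum -/
lemma exists_poly (f : AddCircle T → ℂ) (hf_cont : Continuous f)
    (N : ℕ) (hN : ∀ n : ℤ, (N:ℤ) < |n| → fourierCoeff f n = 0)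
    (hneg : ∀ n : ℤ, n < 0 → fourierCoeff f n = 0) :
    ∃ P : Polynomial ℂ, ∀ x, f x = P.eval ((toCircle x : Circle) : ℂ) := by
  set a : ℕ → ℂ := fun n => fourierCoeff f n with ha
  set f₀ : AddCircle T → ℂ :=
    fun x => ∑ n ∈ Finset.range (N+1), a n * fourier (n : ℤ) x with hf₀
  have hf₀c : Continuous f₀ := by
    apply continuous_finset_sum
    intro n _
    exact continuous_const.mul (fourier (n:ℤ)).continuous
  have hcoeff₀ : ∀ m : ℤ, fourierCoeff f₀ m = fourierCoeff f m := by
    intro m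
    have hexp : fourierCoeff f₀ m
        = ∑ n ∈ Finset.range (N+1), a n * fourierCoeff (fun x : AddCircle T => fourier (n:ℤ) x) m := by
      unfold fourierCoeff
      have heq : (fun t : AddCircle T => fourier (-m) t • f₀ t)
          = fun t => ∑ n ∈ Finset.range (N+1), a n * (fourier (-m) t * fourier (n:ℤ) t) := by
        funext t
        rw [hf₀]
        simp only [smul_eq_mul, Finset.mul_sum]
        apply Finset.sum_congr rfl
        intro n _
        ring
      rw [heq, integral_finset_sum]
      · apply Finset.sum_congr rfl
        intro n _
        rw [MeasureTheory.integral_const_mul]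
        congr 1
      · intro n _
        apply cont_integrable
        exact continuous_const.mul ((fourier (-m)).continuous.mul (fourier (n:ℤ)).continuous)
    rw [hexp]
    simp_rw [fourierCoeff_fourier']
    rcases lt_or_ge m 0 with hm | hm
    · rw [hneg m hm]
      apply Finset.sum_eq_zero
      intro n _
      rw [if_neg (by omega), mul_zero]
    · set mn := m.toNat with hmn
      have hm' : (mn : ℤ) = m := Int.toNat_of_nonneg hm
      have : ∀ n ∈ Finset.range (N+1), a n * (if (n:ℤ) = m then (1:ℂ) else 0)
          = if n = mn then a n else 0 := by
        intro n _
        by_cases h : n = mn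
        · rw [if_pos h, if_pos (by omega), mul_one]
        · rw [if_neg h, if_neg (by omega), mul_zero]
      rw [Finset.sum_congr rfl this, Finset.sum_ite_eq' (Finset.range (N+1)) mn a]
      by_cases hmem : mn ∈ Finset.range (N+1)
      · rw [if_pos hmem, ha]
        simp only [hm']
      · rw [if_neg hmem]
        have habs : (N:ℤ) < |m| := by
          rw [abs_of_nonneg hm]
          simp only [Finset.mem_range] at hmem
          omega
        rw [hN m habs]
  have hzero := continuous_eq_zero_of_fourierCoeff (hf_cont.sub hf₀c)
    (fun m => by rw [show f - f₀ = fun x => f x - f₀ x from rfl, fourierCoeff_sub hf_cont hf₀c, hcoeff₀, sub_self])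
  refine ⟨∑ n ∈ Finset.range (N+1), Polynomial.C (a n) * Polynomial.X ^ n, fun x => ?_⟩
  have hfx : f x = f₀ x := by
    have := hzero x
    simp only [Pi.sub_apply] at this
    linear_combination this
  rw [hfx, hf₀]
  rw [Polynomial.eval_finset_sum]
  apply Finset.sum_congr rfl
  intro n _
  rw [Polynomial.eval_mul, Polynomial.eval_C, Polynomial.eval_pow, Polynomial.eval_X,
    fourier_natCast_eq_pow]


end PaleyAux

section Main
open Complex Metric Set Polynomial Finset

/-- Scalar Paley inequality for lacunary gaps (Case 2): if `f` is a trigonometric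
polynomial whose Fourier coefficients vanish at all negative integers, for
strongly lacunary `(k j)`: `(∑ |f̂(k_j)|²)^{1/2} ≤ 2 ‖f‖₁`. -/
theorem stmt_16 (k : ℕ → ℕ) (hk : ∀ j, k (j + 1) > 2 * k j)
    (f : AddCircle (2 * π) → ℂ) (hf_cont : Continuous f)
    (hf_poly : ∃ N : ℕ, ∀ n : ℤ, (N : ℤ) < |n| → fourierCoeff f n = 0)
    (hneg : ∀ n : ℤ, n < 0 → fourierCoeff f n = 0) :
    Real.sqrt (∑' j, ‖fourierCoeff f (k j)‖ ^ 2) ≤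
      2 * ∫ t, ‖f t‖ ∂haarAddCircle := by
  classical
  set I := ∫ t, ‖f t‖ ∂(haarAddCircle (T := 2*π)) with hI
  have hI0 : 0 ≤ I := integral_nonneg (fun t => norm_nonneg _)
  obtain ⟨N, hN⟩ := hf_poly
  obtain ⟨P, hPf⟩ := exists_poly f hf_cont N hN hneg
  set gfn : AddCircle (2*π) → ℂ := fun x => Gfun P (AddCircle.toCircle x) with hgdef
  set hfn : AddCircle (2*π) → ℂ := fun x => Hfun P (AddCircle.toCircle x) with hhdef
  have hnorm1 : ∀ x : AddCircle (2*π), ‖((AddCircle.toCircle x : Circle) : ℂ)‖ = 1 :=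
    fun x => Circle.norm_coe _
  have hcont_coe : Continuous fun x : AddCircle (2*π) => ((AddCircle.toCircle x : Circle) : ℂ) :=
    continuous_induced_dom.comp AddCircle.continuous_toCircle
  have hg_cont : Continuous gfn := by
    rw [continuous_iff_continuousAt]
    intro x
    exact ContinuousAt.comp (g := Gfun P)
      (f := fun x : AddCircle (2*π) => ((AddCircle.toCircle x : Circle) : ℂ))
      (continuousAt_Gfun P (le_of_eq (hnorm1 x))) hcont_coe.continuousAt
  have hh_cont : Continuous hfn := by
    rw [continuous_iff_continuousAt]
    intro x
    exact ContinuousAt.comp (g := Hfun P)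
      (f := fun x : AddCircle (2*π) => ((AddCircle.toCircle x : Circle) : ℂ))
      (continuousAt_Hfun P (le_of_eq (hnorm1 x))) hcont_coe.continuousAt
  have hgh : ∀ x, gfn x * hfn x = f x := by
    intro x
    rw [hgdef, hhdef]
    simp only []
    rw [Gfun_mul_Hfun P (le_of_eq (hnorm1 x)), hPf x]
  have hgL2 : ∫ t, ‖gfn t‖ ^ 2 ∂haarAddCircle = I := by
    rw [hI]
    apply integral_congr_ae
    apply Filter.Eventually.of_forall
    intro x
    rw [hgdef]
    simp only []
    rw [sq_norm_Gfun P (hnorm1 x), ← hPf x]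
  have hhL2 : ∫ t, ‖hfn t‖ ^ 2 ∂haarAddCircle = I := by
    rw [hI]
    apply integral_congr_ae
    apply Filter.Eventually.of_forall
    intro x
    rw [hhdef]
    simp only []
    rw [sq_norm_Hfun P (hnorm1 x), ← hPf x]
  have hgneg : ∀ n : ℤ, n < 0 → fourierCoeff gfn n = 0 := fun n hn =>
    fourierCoeff_comp_toCircle_eq_zero
      (fun z hz => continuousAt_Gfun P hz) (fun z hz => differentiableAt_Gfun P hz) hn
  have hhneg : ∀ n : ℤ, n < 0 → fourierCoeff hfn n = 0 := fun n hn =>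
    fourierCoeff_comp_toCircle_eq_zero
      (fun z hz => continuousAt_Hfun P hz) (fun z hz => differentiableAt_Hfun P hz) hn
  have Bg : ∀ S : Finset ℤ, ∑ i ∈ S, ‖fourierCoeff gfn i‖ ^ 2 ≤ I :=
    fun S => (sum_sq_fourierCoeff_le hg_cont S).trans (le_of_eq hgL2)
  have Bh : ∀ S : Finset ℤ, ∑ i ∈ S, ‖fourierCoeff hfn i‖ ^ 2 ≤ I :=
    fun S => (sum_sq_fourierCoeff_le hh_cont S).trans (le_of_eq hhL2)
  -- convolution formula
  have hconv : ∀ n : ℕ, fourierCoeff f (n : ℤ)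
      = ∑ i ∈ Finset.Icc (0:ℤ) (n:ℤ), fourierCoeff gfn ((n:ℤ) - i) * fourierCoeff hfn i := by
    intro n
    have hs := hasSum_fourierCoeff_mul hg_cont hh_cont (n : ℤ)
    have hfeq : fourierCoeff (fun x => gfn x * hfn x) (n:ℤ) = fourierCoeff f (n:ℤ) := by
      congr 1
      funext x
      exact hgh x
    rw [hfeq] at hs
    rw [← hs.tsum_eq]
    apply tsum_eq_sum
    intro i hi
    simp only [Finset.mem_Icc, not_and_or, not_le] at hi
    rcases hi with hi | hi
    · rw [hhneg i hi, mul_zero]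
    · rw [hgneg _ (by omega), zero_mul]
  -- monotonicity facts
  have hkmono : StrictMono k := strictMono_nat_of_lt_succ (fun j => by have := hk j; omega)
  have hkj : ∀ j, j ≤ k j := fun j => hkmono.le_apply
  have hk2 : ∀ i j : ℕ, i < j → 2 * k i < k j := by
    intro i j hij
    calc 2 * k i < k (i + 1) := hk i
      _ ≤ k j := hkmono.monotone hij
  -- the tsum is a finite sum
  have hcoeff0 : ∀ j, N < j → fourierCoeff f ((k j : ℕ) : ℤ) = 0 := by
    intro j hj
    apply hN
    have habs : |((k j : ℕ) : ℤ)| = ((k j : ℕ) : ℤ) := abs_of_nonneg (Int.natCast_nonneg _)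
    rw [habs]
    have := hkj j
    omega
  have htsum : (∑' j : ℕ, ‖fourierCoeff f ((k j : ℕ) : ℤ)‖ ^ 2)
      = ∑ j ∈ Finset.range (N+1), ‖fourierCoeff f ((k j : ℕ) : ℤ)‖ ^ 2 := by
    apply tsum_eq_sum
    intro j hj
    rw [hcoeff0 j (by simp only [Finset.mem_range] at hj; omega)]
    simp
  -- blocks
  set lowS : ℕ → Finset ℤ := fun j =>
    (Finset.Icc (0:ℤ) (k j)).filter (fun i => 2*i ≤ (k j : ℤ)) with hlowS
  set highS : ℕ → Finset ℤ := fun j =>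
    (Finset.Icc (0:ℤ) (k j)).filter (fun i => ¬ 2*i ≤ (k j : ℤ)) with hhighS
  set Gblock : ℕ → Finset ℤ := fun j =>
    (Finset.Icc (0:ℤ) (k j)).filter (fun m => (k j : ℤ) ≤ 2*m) with hGblock
  set A : ℕ → ℂ := fun j =>
    ∑ i ∈ lowS j, fourierCoeff gfn ((k j : ℤ) - i) * fourierCoeff hfn i with hA
  set B : ℕ → ℂ := fun j =>
    ∑ i ∈ highS j, fourierCoeff gfn ((k j : ℤ) - i) * fourierCoeff hfn i with hB
  have hAB : ∀ j, fourierCoeff f ((k j : ℕ) : ℤ) = A j + B j := by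
    intro j
    rw [hconv (k j), hA, hB]
    exact (Finset.sum_filter_add_sum_filter_not _ _ _).symm
  -- Cauchy-Schwarz per j for A
  have hAj : ∀ j, ‖A j‖ ^ 2 ≤ (∑ m ∈ Gblock j, ‖fourierCoeff gfn m‖ ^ 2) * I := by
    intro j
    have h1 : ‖A j‖ ≤ ∑ i ∈ lowS j, ‖fourierCoeff gfn ((k j : ℤ) - i)‖ * ‖fourierCoeff hfn i‖ := by
      rw [hA]
      refine (norm_sum_le _ _).trans ?_
      apply Finset.sum_le_sum
      intro i _
      rw [norm_mul]
    have h2 : ‖A j‖ ^ 2 ≤ (∑ i ∈ lowS j, ‖fourierCoeff gfn ((k j : ℤ) - i)‖ * ‖fourierCoeff hfn i‖) ^ 2 := by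
      apply pow_le_pow_left₀ (norm_nonneg _) h1
    refine h2.trans ?_
    refine (Finset.sum_mul_sq_le_sq_mul_sq _ _ _).trans ?_
    have hre : ∑ i ∈ lowS j, ‖fourierCoeff gfn ((k j : ℤ) - i)‖ ^ 2
        = ∑ m ∈ Gblock j, ‖fourierCoeff gfn m‖ ^ 2 := by
      apply Finset.sum_nbij' (fun i => (k j : ℤ) - i) (fun m => (k j : ℤ) - m)
      · intro i hi
        simp only [hlowS, Finset.mem_filter, Finset.mem_Icc] at hi
        simp only [hGblock, Finset.mem_filter, Finset.mem_Icc]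
        omega
      · intro m hm
        simp only [hGblock, Finset.mem_filter, Finset.mem_Icc] at hm
        simp only [hlowS, Finset.mem_filter, Finset.mem_Icc]
        omega
      · intro i _; ring
      · intro m _; ring
      · intro i _; rfl
    rw [hre]
    exact mul_le_mul_of_nonneg_left (Bh (lowS j)) (Finset.sum_nonneg fun m _ => by positivity)
  -- Cauchy-Schwarz per j for B
  have hBj : ∀ j, ‖B j‖ ^ 2 ≤ I * (∑ i ∈ highS j, ‖fourierCoeff hfn i‖ ^ 2) := by
    intro j
    have h1 : ‖B j‖ ≤ ∑ i ∈ highS j, ‖fourierCoeff gfn ((k j : ℤ) - i)‖ * ‖fourierCoeff hfn i‖ := by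
      rw [hB]
      refine (norm_sum_le _ _).trans ?_
      apply Finset.sum_le_sum
      intro i _
      rw [norm_mul]
    have h2 : ‖B j‖ ^ 2 ≤ (∑ i ∈ highS j, ‖fourierCoeff gfn ((k j : ℤ) - i)‖ * ‖fourierCoeff hfn i‖) ^ 2 :=
      pow_le_pow_left₀ (norm_nonneg _) h1 2
    refine h2.trans ?_
    refine (Finset.sum_mul_sq_le_sq_mul_sq _ _ _).trans ?_
    have hre : ∑ i ∈ highS j, ‖fourierCoeff gfn ((k j : ℤ) - i)‖ ^ 2
        = ∑ m ∈ (highS j).image (fun i => (k j : ℤ) - i), ‖fourierCoeff gfn m‖ ^ 2 := by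
      rw [Finset.sum_image]
      intro i _ i' _ h
      have h' : (k j : ℤ) - i = (k j : ℤ) - i' := h
      omega
    rw [hre]
    exact mul_le_mul_of_nonneg_right (Bg _) (Finset.sum_nonneg fun i _ => by positivity)
  -- disjointness of blocks
  have hGdisj : ∀ i j : ℕ, i ≠ j → Disjoint (Gblock i) (Gblock j) := by
    intro i j hij
    rw [Finset.disjoint_left]
    intro m hmi hmj
    simp only [hGblock, Finset.mem_filter, Finset.mem_Icc] at hmi hmj
    rcases lt_or_gt_of_ne hij with hlt | hlt
    · have := hk2 i j hlt; omega
    · have := hk2 j i hlt; omega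
  have hHdisj : ∀ i j : ℕ, i ≠ j → Disjoint (highS i) (highS j) := by
    intro i j hij
    rw [Finset.disjoint_left]
    intro m hmi hmj
    simp only [hhighS, Finset.mem_filter, Finset.mem_Icc, not_le] at hmi hmj
    rcases lt_or_gt_of_ne hij with hlt | hlt
    · have := hk2 i j hlt; omega
    · have := hk2 j i hlt; omega
  -- summed bounds
  have hAsum : ∑ j ∈ Finset.range (N+1), ‖A j‖ ^ 2 ≤ I * I := by
    have step1 : ∑ j ∈ Finset.range (N+1), ‖A j‖ ^ 2
        ≤ ∑ j ∈ Finset.range (N+1), (∑ m ∈ Gblock j, ‖fourierCoeff gfn m‖ ^ 2) * I :=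
      Finset.sum_le_sum (fun j _ => hAj j)
    refine step1.trans ?_
    rw [← Finset.sum_mul]
    apply mul_le_mul_of_nonneg_right _ hI0
    rw [← Finset.sum_biUnion (fun i _ j _ hij => hGdisj i j hij)]
    exact Bg _
  have hBsum : ∑ j ∈ Finset.range (N+1), ‖B j‖ ^ 2 ≤ I * I := by
    have step1 : ∑ j ∈ Finset.range (N+1), ‖B j‖ ^ 2
        ≤ ∑ j ∈ Finset.range (N+1), I * (∑ i ∈ highS j, ‖fourierCoeff hfn i‖ ^ 2) :=
      Finset.sum_le_sum (fun j _ => hBj j)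
    refine step1.trans ?_
    rw [← Finset.mul_sum]
    apply mul_le_mul_of_nonneg_left _ hI0
    rw [← Finset.sum_biUnion (fun i _ j _ hij => hHdisj i j hij)]
    exact Bh _
  -- Minkowski-type finish
  set SA := ∑ j ∈ Finset.range (N+1), ‖A j‖ ^ 2 with hSA
  set SB := ∑ j ∈ Finset.range (N+1), ‖B j‖ ^ 2 with hSB
  have hSA0 : 0 ≤ SA := Finset.sum_nonneg fun j _ => by positivity
  have hSB0 : 0 ≤ SB := Finset.sum_nonneg fun j _ => by positivity
  have hABn : 0 ≤ ∑ j ∈ Finset.range (N+1), ‖A j‖ * ‖B j‖ :=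
    Finset.sum_nonneg fun j _ => mul_nonneg (norm_nonneg _) (norm_nonneg _)
  have c1 : ∑ j ∈ Finset.range (N+1), ‖A j‖ * ‖B j‖ ≤ Real.sqrt SA * Real.sqrt SB := by
    rw [← Real.sqrt_mul hSA0]
    refine (Real.le_sqrt hABn (mul_nonneg hSA0 hSB0)).2 ?_
    exact Finset.sum_mul_sq_le_sq_mul_sq _ _ _
  have e1 : ∑ j ∈ Finset.range (N+1), ‖A j + B j‖ ^ 2
      ≤ SA + SB + 2 * ∑ j ∈ Finset.range (N+1), ‖A j‖ * ‖B j‖ := by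
    have step : ∑ j ∈ Finset.range (N+1), ‖A j + B j‖ ^ 2
        ≤ ∑ j ∈ Finset.range (N+1), (‖A j‖ + ‖B j‖) ^ 2 :=
      Finset.sum_le_sum fun j _ => pow_le_pow_left₀ (norm_nonneg _) (norm_add_le _ _) 2
    refine step.trans (le_of_eq ?_)
    rw [Finset.sum_congr rfl (fun j _ => by
      show (‖A j‖ + ‖B j‖) ^ 2 = ‖A j‖^2 + ‖B j‖^2 + 2*(‖A j‖*‖B j‖)
      ring)]
    rw [Finset.sum_add_distrib, Finset.sum_add_distrib, ← Finset.mul_sum, hSA, hSB]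
  have key : ∑ j ∈ Finset.range (N+1), ‖A j + B j‖ ^ 2
      ≤ (Real.sqrt SA + Real.sqrt SB) ^ 2 := by
    nlinarith [Real.sq_sqrt hSA0, Real.sq_sqrt hSB0, Real.sqrt_nonneg SA, Real.sqrt_nonneg SB]
  have hsqSA : Real.sqrt SA ≤ I := by
    have := Real.sqrt_le_sqrt hAsum
    rwa [Real.sqrt_mul_self hI0] at this
  have hsqSB : Real.sqrt SB ≤ I := by
    have := Real.sqrt_le_sqrt hBsum
    rwa [Real.sqrt_mul_self hI0] at this
  calc Real.sqrt (∑' j : ℕ, ‖fourierCoeff f ((k j : ℕ) : ℤ)‖ ^ 2)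
      = Real.sqrt (∑ j ∈ Finset.range (N+1), ‖A j + B j‖ ^ 2) := by
        rw [htsum]
        congr 1
        exact Finset.sum_congr rfl fun j _ => by rw [hAB j]
    _ ≤ Real.sqrt ((Real.sqrt SA + Real.sqrt SB) ^ 2) := Real.sqrt_le_sqrt key
    _ = Real.sqrt SA + Real.sqrt SB := Real.sqrt_sq (by positivity)
    _ ≤ I + I := add_le_add hsqSA hsqSB
    _ = 2 * I := by ring

end Main
end
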